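/- For n ≥ 5, the commutator subgroup B_n' is the normal closure in B_n of the single element σ_1σ_2^{−1}. -/

import Mathlib

/-- Artin braid relators for the braid group on `n` strands, with generators
`FreeGroup.of i` corresponding to `σ_{i+1}` for `i : Fin (n-1)`. -/
def braidRels (n : ℕ) : Set (FreeGroup (Fin (n - 1))) :=
  {r | ∃ i j : Fin (n - 1),
      ((j : ℕ) ≥ (i : ℕ) + 2 ∧
        r = FreeGroup.of i * FreeGroup.of j * (FreeGroup.of i)⁻¹ * (FreeGroup.of j)⁻¹) ∨
      ((j : ℕ) = (i : ℕ) + 1 ∧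
        r = FreeGroup.of i * FreeGroup.of j * FreeGroup.of i *
          (FreeGroup.of j * FreeGroup.of i * FreeGroup.of j)⁻¹)}

/-- The braid group on `n` strands. -/
def BraidGroup (n : ℕ) : Type := PresentedGroup (braidRels n)

instance (n : ℕ) : Group (BraidGroup n) :=
  inferInstanceAs (Group (PresentedGroup (braidRels n)))

/-- The Artin generator `σ_i` of `BraidGroup n`, for `1 ≤ i ≤ n-1` (junk value `1` otherwise). -/
def σ {n : ℕ} (i : ℕ) : BraidGroup n :=
  if h : 1 ≤ i ∧ i < n then PresentedGroup.of (⟨i - 1, by omega⟩ : Fin (n - 1)) else 1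

/-- The element `α = σ_1 σ_2 ⋯ σ_{n-1}`. -/
def α (n : ℕ) : BraidGroup n := ((List.range (n - 1)).map (fun i => σ (i + 1))).prod

/-- The half-twist `σ_j` for an index `j` taken modulo `n`, defined by conjugating
`σ_1` by the rotation `α`: `σ_{1+m} = α^m σ_1 α^{-m}`. -/
def σm {n : ℕ} (j : ℤ) : BraidGroup n := (α n) ^ (j - 1) * σ 1 * (α n) ^ (1 - j)

/-!
Conjugating `σ_1` by `σ_1 σ_2` gives `σ_2`, so `σ_1 σ_2⁻¹` is a commutator. Conversely,
modulo the normal closure of `σ_1 σ_2⁻¹` we get `σ_1 = σ_2`, and then inductively `σ_i = σ_1`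
for all `i`: if `σ_{i-2} = σ_{i-1} = σ_1`, then `σ_1` commutes with `σ_i` and satisfies the braid
relation with it, which forces `σ_i = σ_1`. Hence the quotient is cyclic, so abelian.
-/

section BraidRelation

variable {G : Type*} [Group G] {a b : G}

open scoped commutatorElement in
theorem mul_inv_eq_commutatorElement_of_braid (h : a * b * a = b * a * b) :
    a * b⁻¹ = ⁅a, a * b⁆ := by
  have hconj : (a * b) * a * (a * b)⁻¹ = b := by rw [h]; group
  calc a * b⁻¹ = a * ((a * b) * a * (a * b)⁻¹)⁻¹ := by rw [hconj]
    _ = ⁅a, a * b⁆ := by rw [commutatorElement_def]; group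

theorem eq_of_commute_of_braid (hc : Commute a b) (h : a * b * a = b * a * b) : a = b := by
  have : b * (a * a) = b * (a * b) := by
    calc b * (a * a) = a * b * a := by rw [← mul_assoc, hc.eq]
      _ = b * a * b := h
      _ = b * (a * b) := mul_assoc _ _ _
  exact mul_left_cancel (mul_left_cancel this)

end BraidRelation

namespace BraidGroup

variable {n : ℕ}

theorem σ_eq_of {i : ℕ} (hi : 1 ≤ i) (hin : i < n) :
    (σ i : BraidGroup n) = PresentedGroup.of (⟨i - 1, by omega⟩ : Fin (n - 1)) :=
  dif_pos ⟨hi, hin⟩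

theorem σ_commute {i j : ℕ} (hi : 1 ≤ i) (hij : i + 2 ≤ j) (hjn : j < n) :
    Commute (σ i : BraidGroup n) (σ j) := by
  rw [Commute, SemiconjBy, σ_eq_of hi (by omega), σ_eq_of (by omega) hjn]
  exact PresentedGroup.mk_eq_mk_of_mul_inv_mem
    ⟨⟨i - 1, by omega⟩, ⟨j - 1, by omega⟩, Or.inl ⟨by dsimp only; omega, by group⟩⟩

theorem σ_braid {i : ℕ} (hi : 1 ≤ i) (hin : i + 1 < n) :
    (σ i : BraidGroup n) * σ (i + 1) * σ i = σ (i + 1) * σ i * σ (i + 1) := by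
  rw [σ_eq_of hi (by omega), σ_eq_of (by omega) hin]
  exact PresentedGroup.mk_eq_mk_of_mul_inv_mem
    ⟨⟨i - 1, by omega⟩, ⟨i + 1 - 1, by omega⟩, Or.inr ⟨by dsimp only; omega, rfl⟩⟩

theorem closure_range_σ :
    Subgroup.closure (Set.range fun a : Fin (n - 1) ↦ (σ (a + 1) : BraidGroup n)) = ⊤ := by
  have hσ : (fun a : Fin (n - 1) ↦ (σ (a + 1) : BraidGroup n)) = PresentedGroup.of :=
    funext fun a ↦ σ_eq_of (Nat.le_add_left 1 a) (by omega)
  rw [hσ]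
  exact PresentedGroup.closure_range_of _

variable {H : Type*} [Group H] (f : BraidGroup n →* H)

theorem map_σ_eq_map_σ_one (h12 : f (σ 1) = f (σ 2)) :
    ∀ i, 1 ≤ i → i < n → f (σ i) = f (σ 1)
  | 1, _, _ => rfl
  | 2, _, _ => h12.symm
  | k + 3, _, hkn => by
    have hk1 := map_σ_eq_map_σ_one h12 (k + 1) (by omega) (by omega)
    have hk2 := map_σ_eq_map_σ_one h12 (k + 2) (by omega) (by omega)
    have hc := (σ_commute (by omega) (le_refl (k + 3)) hkn).map f
    have hb := congrArg f (σ_braid (i := k + 2) (by omega) hkn)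
    rw [hk1] at hc
    simp only [map_mul, hk2] at hb
    exact (eq_of_commute_of_braid hc hb).symm

theorem map_mem_zpowers_map_σ_one (h12 : f (σ 1) = f (σ 2)) (g : BraidGroup n) :
    f g ∈ Subgroup.zpowers (f (σ 1)) := by
  refine (Subgroup.closure_le ((Subgroup.zpowers _).comap f)).2 ?_ (closure_range_σ.ge trivial)
  rintro _ ⟨a, rfl⟩
  rw [SetLike.mem_coe, Subgroup.mem_comap,
    map_σ_eq_map_σ_one f h12 (a + 1) (by omega) (by omega)]
  exact Subgroup.mem_zpowers _

theorem commutator_le_ker (h12 : f (σ 1) = f (σ 2)) : commutator (BraidGroup n) ≤ f.ker := by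
  rw [commutator_def, Subgroup.commutator_le]
  rintro g - h -
  obtain ⟨p, hp⟩ := Subgroup.mem_zpowers_iff.1 (map_mem_zpowers_map_σ_one f h12 g)
  obtain ⟨q, hq⟩ := Subgroup.mem_zpowers_iff.1 (map_mem_zpowers_map_σ_one f h12 h)
  rw [MonoidHom.mem_ker, map_commutatorElement, commutatorElement_eq_one_iff_commute, ← hp, ← hq]
  exact Commute.zpow_zpow_self _ p q

end BraidGroup

open BraidGroup in
theorem commutator_eq_normal_closure (n : ℕ) (hn : 5 ≤ n) :
    Subgroup.normalClosure ({σ 1 * (σ 2)⁻¹} : Set (BraidGroup n)) =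
      commutator (BraidGroup n) := by
  refine le_antisymm (Subgroup.normalClosure_le_normal ?_) ?_
  · rw [Set.singleton_subset_iff,
      mul_inv_eq_commutatorElement_of_braid (σ_braid le_rfl (by omega))]
    exact Subgroup.commutator_mem_commutator trivial trivial
  · set N := Subgroup.normalClosure ({σ 1 * (σ 2)⁻¹} : Set (BraidGroup n))
    have h12 : QuotientGroup.mk' N (σ 1) = QuotientGroup.mk' N (σ 2) := by
      rw [QuotientGroup.mk'_apply, QuotientGroup.mk'_apply, QuotientGroup.eq_iff_div_mem,
        div_eq_mul_inv]
      exact Subgroup.subset_normalClosure (Set.mem_singleton _)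
    simpa only [QuotientGroup.ker_mk'] using commutator_le_ker (QuotientGroup.mk' N) h12
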